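/- arXiv:1703.06688 — 2 statements merged into one kernel-verified Lean document; each statement's English description precedes it below -/
import Mathlib

section
/- Abstract Céa-type estimate for penalty problems: Let H be a real Hilbert space, a a symmetric positive semi-definite bounded bilinear form, ℓ a bounded linear functional, b₁,…,b_m symmetric positive semi-definite bounded bilinear forms, X ⊆ H a closed subspace, ε₁,…,ε_m > 0, and a_ε = a + Σᵢ (1/εᵢ)bᵢ. Let u ∈ H and suppose u_ε ∈ X satisfies the variational equation a_ε(u_ε, v) = ℓ(v) + Σᵢ (1/εᵢ) bᵢ(u, v) for all v ∈ X. Suppose there exist constants cᵢ > 0 such that |a(u,v) − ℓ(v)| ≤ Σᵢ cᵢ ‖v‖_{bᵢ} for all v ∈ X. Then ‖u − u_ε‖²_{a_ε} ≤ 3 · inf_{v ∈ X} ( ‖u − v‖²_{a_ε} + Σᵢ εᵢ cᵢ² ). -/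
/-!
Put `e = u - uε`, `d = u - v` and `w = v - uε ∈ X`, so that `e = d + w`. The variational equation
gives the Galerkin-type identity `a_ε(e, w) = a(u, w) - ℓ(w)`, hence
`‖e‖²_{a_ε} = a_ε(e, d) + a(u, w) - ℓ(w)`. The first term is at most `‖e‖ ‖d‖` by Cauchy–Schwarz;
by the consistency hypothesis and a weighted Cauchy–Schwarz inequality the second is at most
`s ‖w‖_{a_ε} ≤ s (‖e‖ + ‖d‖)` with `s² = Σᵢ εᵢ cᵢ²`. Young's inequality turns
`‖e‖² ≤ ‖e‖ ‖d‖ + s (‖e‖ + ‖d‖)` into `‖e‖² ≤ 3 (‖d‖² + s²)`.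
-/

open Finset

lemma sq_le_three_mul_of_sq_le_mul_add {x y s : ℝ} (h : x ^ 2 ≤ x * y + s * (x + y)) :
    x ^ 2 ≤ 3 * (y ^ 2 + s ^ 2) := by
  nlinarith [sq_nonneg (x - 2 * y), sq_nonneg (x - 2 * s), sq_nonneg (y - s)]

lemma Real.sum_mul_sqrt_le_sqrt_mul_sqrt {ι : Type*} (t : Finset ι) {ε x : ι → ℝ}
    (hε : ∀ i, 0 < ε i) (hx : ∀ i, 0 ≤ x i) (c : ι → ℝ) :
    ∑ i ∈ t, c i * √(x i) ≤ √(∑ i ∈ t, ε i * c i ^ 2) * √(∑ i ∈ t, (ε i)⁻¹ * x i) := by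
  have hfactor : ∀ i, c i * √(x i) = c i * √(ε i) * √((ε i)⁻¹ * x i) := fun i => by
    rw [Real.sqrt_mul (inv_nonneg.2 (hε i).le), Real.sqrt_inv, mul_assoc,
      mul_inv_cancel_left₀ (Real.sqrt_pos.2 (hε i)).ne']
  have hleft : ∀ i, (c i * √(ε i)) ^ 2 = ε i * c i ^ 2 := fun i => by
    rw [mul_pow, Real.sq_sqrt (hε i).le, mul_comm]
  have hright : ∀ i, √((ε i)⁻¹ * x i) ^ 2 = (ε i)⁻¹ * x i := fun i =>
    Real.sq_sqrt (mul_nonneg (inv_nonneg.2 (hε i).le) (hx i))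
  simpa only [← hfactor, hleft, hright] using
    Real.sum_mul_le_sqrt_mul_sqrt t (fun i => c i * √(ε i)) (fun i => √((ε i)⁻¹ * x i))

namespace LinearMap.IsPosSemidef

variable {M : Type*} [AddCommGroup M] [Module ℝ M] {B : M →ₗ[ℝ] M →ₗ[ℝ] ℝ}

lemma apply_le_sqrt_mul_sqrt (hB : B.IsPosSemidef) (x y : M) :
    B x y ≤ √(B x x) * √(B y y) := by
  rw [← Real.sqrt_mul (hB.nonneg x)]
  exact Real.le_sqrt_of_sq_le (BilinForm.apply_sq_le_of_symm B hB.nonneg hB.isSymm x y)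

lemma apply_add_self_le (hB : B.IsPosSemidef) (x y : M) :
    B (x + y) (x + y) ≤ (√(B x x) + √(B y y)) ^ 2 := by
  have hexpand : B (x + y) (x + y) = B x x + 2 * B x y + B y y := by
    simp only [map_add, add_apply, ← hB.isSymm.eq x y, RingHom.id_apply]
    ring
  rw [hexpand, add_sq, Real.sq_sqrt (hB.nonneg x), Real.sq_sqrt (hB.nonneg y), mul_assoc]
  linarith [hB.apply_le_sqrt_mul_sqrt x y]

lemma sqrt_apply_add_self_le (hB : B.IsPosSemidef) (x y : M) :
    √(B (x + y) (x + y)) ≤ √(B x x) + √(B y y) :=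
  (Real.sqrt_le_left (by positivity)).2 (hB.apply_add_self_le x y)

lemma apply_self_le_three_mul {e d : M} {s : ℝ} (hB : B.IsPosSemidef) (hs : 0 ≤ s)
    (h : B e e ≤ B e d + s * √(B (e - d) (e - d))) :
    B e e ≤ 3 * (B d d + s ^ 2) := by
  have htri : √(B (e - d) (e - d)) ≤ √(B e e) + √(B d d) := by
    simpa only [sub_eq_add_neg, map_neg, neg_apply, neg_neg] using
      hB.sqrt_apply_add_self_le e (-d)
  have hsq : √(B e e) ^ 2 ≤ √(B e e) * √(B d d) + s * (√(B e e) + √(B d d)) := by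
    rw [Real.sq_sqrt (hB.nonneg e)]
    nlinarith [hB.apply_le_sqrt_mul_sqrt e d]
  simpa only [Real.sq_sqrt (hB.nonneg _)] using sq_le_three_mul_of_sq_le_mul_add hsq

end LinearMap.IsPosSemidef

section PenaltyForm

variable {ι M : Type*} [Fintype ι] [AddCommGroup M] [Module ℝ M]
  {a : M →ₗ[ℝ] M →ₗ[ℝ] ℝ} {b : ι → M →ₗ[ℝ] M →ₗ[ℝ] ℝ} {ε : ι → ℝ}

variable (a b ε) in
noncomputable def penaltyForm : M →ₗ[ℝ] M →ₗ[ℝ] ℝ :=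
  a + ∑ i, (ε i)⁻¹ • b i

@[simp]
lemma penaltyForm_apply (x y : M) :
    penaltyForm a b ε x y = a x y + ∑ i, (ε i)⁻¹ * b i x y := by
  simp [penaltyForm, LinearMap.sum_apply]

lemma isPosSemidef_penaltyForm (ha : a.IsPosSemidef) (hb : ∀ i, (b i).IsPosSemidef)
    (hε : ∀ i, 0 ≤ ε i) : (penaltyForm a b ε).IsPosSemidef where
  eq x y := by
    simp only [penaltyForm_apply, RingHom.id_apply, ← ha.isSymm.eq x y, ← (hb _).isSymm.eq x y]
  nonneg x := by
    rw [penaltyForm_apply]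
    exact add_nonneg (ha.nonneg x)
      (sum_nonneg fun i _ => mul_nonneg (inv_nonneg.2 (hε i)) ((hb i).nonneg x))

lemma sum_mul_sqrt_le_sqrt_mul_sqrt_penaltyForm (ha : ∀ x, 0 ≤ a x x)
    (hb : ∀ i x, 0 ≤ b i x x) (hε : ∀ i, 0 < ε i) (c : ι → ℝ) (x : M) :
    ∑ i, c i * √(b i x x) ≤ √(∑ i, ε i * c i ^ 2) * √(penaltyForm a b ε x x) := by
  refine (Real.sum_mul_sqrt_le_sqrt_mul_sqrt univ hε (hb · x) c).trans ?_
  gcongr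
  rw [penaltyForm_apply]
  linarith [ha x]

end PenaltyForm

theorem stmt3_general {H : Type*} [NormedAddCommGroup H] [InnerProductSpace ℝ H]
    (m : ℕ) (a : H →ₗ[ℝ] H →ₗ[ℝ] ℝ) (b : Fin m → H →ₗ[ℝ] H →ₗ[ℝ] ℝ) (ℓ : H →L[ℝ] ℝ)
    (ha_symm : ∀ v w, a v w = a w v) (ha_pos : ∀ v, 0 ≤ a v v)
    (hb_symm : ∀ i v w, b i v w = b i w v) (hb_pos : ∀ i v, 0 ≤ b i v v)
    (X : Submodule ℝ H)
    (ε c : Fin m → ℝ) (hε : ∀ i, 0 < ε i)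
    (u uε : H) (huε : uε ∈ X)
    (hvar : ∀ v ∈ X, a uε v + ∑ i, (ε i)⁻¹ * b i uε v = ℓ v + ∑ i, (ε i)⁻¹ * b i u v)
    (hcapture : ∀ v ∈ X, |a u v - ℓ v| ≤ ∑ i, c i * Real.sqrt (b i v v)) :
    ∀ v ∈ X,
      a (u - uε) (u - uε) + ∑ i, (ε i)⁻¹ * b i (u - uε) (u - uε)
        ≤ 3 * ((a (u - v) (u - v) + ∑ i, (ε i)⁻¹ * b i (u - v) (u - v))
            + ∑ i, ε i * (c i) ^ 2) := by
  intro v hv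
  set A := penaltyForm a b ε
  have hA : A.IsPosSemidef := isPosSemidef_penaltyForm ⟨⟨ha_symm⟩, ⟨ha_pos⟩⟩
    (fun i => ⟨⟨hb_symm i⟩, ⟨hb_pos i⟩⟩) (fun i => (hε i).le)
  have hw : v - uε ∈ X := X.sub_mem hv huε
  have hgalerkin : A (u - uε) (v - uε) = a u (v - uε) - ℓ (v - uε) := by
    rw [LinearMap.map_sub₂, penaltyForm_apply, penaltyForm_apply]
    linarith [hvar _ hw]
  have hresidual : A (u - uε) (u - uε) ≤
      A (u - uε) (u - v) + √(∑ i, ε i * c i ^ 2) * √(A (u - uε - (u - v)) (u - uε - (u - v))) := by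
    rw [show u - uε - (u - v) = v - uε by abel, ← sub_add_sub_cancel u v uε, map_add,
      sub_add_sub_cancel, hgalerkin]
    gcongr
    exact (le_abs_self _).trans ((hcapture _ hw).trans
      (sum_mul_sqrt_le_sqrt_mul_sqrt_penaltyForm ha_pos hb_pos hε c _))
  simpa only [A, penaltyForm_apply, Real.sq_sqrt (sum_nonneg fun i _ =>
      mul_nonneg (hε i).le (sq_nonneg (c i)))] using
    hA.apply_self_le_three_mul (Real.sqrt_nonneg _) hresidual

/-- Abstract Céa-type estimate for penalty problems. -/
theorem stmt3 {H : Type*} [NormedAddCommGroup H] [InnerProductSpace ℝ H] [CompleteSpace H]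
    (m : ℕ) (a : H →ₗ[ℝ] H →ₗ[ℝ] ℝ) (b : Fin m → H →ₗ[ℝ] H →ₗ[ℝ] ℝ) (ℓ : H →L[ℝ] ℝ)
    (ha_symm : ∀ v w, a v w = a w v) (ha_pos : ∀ v, 0 ≤ a v v)
    (ha_bdd : ∃ C : ℝ, ∀ v w, |a v w| ≤ C * ‖v‖ * ‖w‖)
    (hb_symm : ∀ i v w, b i v w = b i w v) (hb_pos : ∀ i v, 0 ≤ b i v v)
    (hb_bdd : ∀ i, ∃ C : ℝ, ∀ v w, |b i v w| ≤ C * ‖v‖ * ‖w‖)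
    (X : Submodule ℝ H) (hX : IsClosed (X : Set H))
    (ε c : Fin m → ℝ) (hε : ∀ i, 0 < ε i) (hc : ∀ i, 0 < c i)
    (u uε : H) (huε : uε ∈ X)
    (hvar : ∀ v ∈ X, a uε v + ∑ i, (ε i)⁻¹ * b i uε v = ℓ v + ∑ i, (ε i)⁻¹ * b i u v)
    (hcapture : ∀ v ∈ X, |a u v - ℓ v| ≤ ∑ i, c i * Real.sqrt (b i v v)) :
    ∀ v ∈ X,
      a (u - uε) (u - uε) + ∑ i, (ε i)⁻¹ * b i (u - uε) (u - uε)
        ≤ 3 * ((a (u - v) (u - v) + ∑ i, (ε i)⁻¹ * b i (u - v) (u - v))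
            + ∑ i, ε i * (c i) ^ 2) :=
  stmt3_general m a b ℓ ha_symm ha_pos hb_symm hb_pos X ε c hε u uε huε hvar hcapture
end

section
/- Strang-type coercivity transfer: Let H be a real Hilbert space with norm ‖·‖, and let a, ã, bᵢ, b̃ᵢ (i=1,…,m) be symmetric positive semi-definite bilinear forms on a subspace X with: a bounded with constant ‖a‖ (|a(v,w)| ≤ ‖a‖‖v‖‖w‖), ã₁ = ã + Σᵢ b̃ᵢ coercive with constant α̃ > 0 on X, and |bᵢ(v,v) − b̃ᵢ(v,v)| ≤ cᵢ‖v‖² for all v ∈ X. Then for ε = (ε₁,…,ε_m) ∈ (0,1]^m, setting a_ε = a + Σᵢ(1/εᵢ)bᵢ and ã_ε = ã + Σᵢ(1/εᵢ)b̃ᵢ, every w ∈ X satisfies ‖w‖²_{a_ε} ≤ ( ‖a‖/α̃ + 1 + Σᵢ cᵢ/(εᵢ α̃) ) · ‖w‖²_{ã_ε}. -/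
/-- Strang-type coercivity transfer:
`‖w‖²_{a_ε} ≤ (‖a‖/αApprox + 1 + Σᵢ cᵢ/(εᵢ αApprox)) ‖w‖²_{aApprox_ε}` on `X`. -/
theorem stmt9 {H : Type*} [NormedAddCommGroup H] [InnerProductSpace ℝ H] [CompleteSpace H]
    (m : ℕ) (X : Submodule ℝ H)
    (a aApprox : H →ₗ[ℝ] H →ₗ[ℝ] ℝ) (b bApprox : Fin m → H →ₗ[ℝ] H →ₗ[ℝ] ℝ)
    (ha_symm : ∀ v w, a v w = a w v) (ha_pos : ∀ v, 0 ≤ a v v)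
    (haApprox_symm : ∀ v w, aApprox v w = aApprox w v) (haApprox_pos : ∀ v, 0 ≤ aApprox v v)
    (hb_symm : ∀ i v w, b i v w = b i w v) (hb_pos : ∀ i v, 0 ≤ b i v v)
    (hbApprox_symm : ∀ i v w, bApprox i v w = bApprox i w v) (hbApprox_pos : ∀ i v, 0 ≤ bApprox i v v)
    (normA : ℝ) (hnormA : 0 ≤ normA)
    (ha_bdd : ∀ v w, |a v w| ≤ normA * ‖v‖ * ‖w‖)
    (αApprox : ℝ) (hαApprox : 0 < αApprox)
    (hcoerc : ∀ v ∈ X, αApprox * ‖v‖ ^ 2 ≤ aApprox v v + ∑ i, bApprox i v v)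
    (c : Fin m → ℝ)
    (hclose : ∀ i, ∀ v ∈ X, |b i v v - bApprox i v v| ≤ c i * ‖v‖ ^ 2)
    (ε : Fin m → ℝ) (hε : ∀ i, 0 < ε i) (hε1 : ∀ i, ε i ≤ 1) :
    ∀ w ∈ X,
      a w w + ∑ i, (ε i)⁻¹ * b i w w
        ≤ (normA / αApprox + 1 + ∑ i, c i / (ε i * αApprox))
            * (aApprox w w + ∑ i, (ε i)⁻¹ * bApprox i w w) := by
  intro w hw
  by_cases hw0 : w = 0
  · simp [hw0]
  have hw0' : 0 < ‖w‖ := norm_pos_iff.mpr hw0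
  have hN : (0:ℝ) < ‖w‖ ^ 2 := by positivity
  set N : ℝ := ‖w‖ ^ 2 with hNdef
  set A : ℝ := aApprox w w + ∑ i, (ε i)⁻¹ * bApprox i w w with hAdef
  -- each c i is nonneg
  have hc : ∀ i, 0 ≤ c i := by
    intro i
    have h1 := hclose i w hw
    have h2 : (0:ℝ) ≤ c i * N := le_trans (abs_nonneg _) h1
    nlinarith [h2, hN]
  -- sum of bApprox ≤ weighted sum
  have hsum : (∑ i, bApprox i w w) ≤ ∑ i, (ε i)⁻¹ * bApprox i w w := by
    apply Finset.sum_le_sum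
    intro i _
    have h1 : (1:ℝ) ≤ (ε i)⁻¹ := (one_le_inv_iff₀).2 ⟨hε i, hε1 i⟩
    nlinarith [hbApprox_pos i w]
  have hcoercA : αApprox * N ≤ A := by
    have h := hcoerc w hw
    rw [← hNdef] at h
    rw [hAdef]
    linarith
  have hA : (0:ℝ) ≤ A := le_trans (by positivity) hcoercA
  -- bound a w w
  have haw : a w w ≤ normA * N := by
    have := ha_bdd w w
    have h2 : a w w ≤ normA * ‖w‖ * ‖w‖ := le_trans (le_abs_self _) this
    nlinarith
  -- termwise bound on b sum
  have hbsum : (∑ i, (ε i)⁻¹ * b i w w)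
      ≤ (∑ i, (ε i)⁻¹ * bApprox i w w) + (∑ i, c i / ε i) * N := by
    rw [Finset.sum_mul, ← Finset.sum_add_distrib]
    apply Finset.sum_le_sum
    intro i _
    have h1 := hclose i w hw
    have h2 : b i w w - bApprox i w w ≤ c i * N := le_trans (le_abs_self _) h1
    have hεi := hε i
    have hinv : (0:ℝ) < (ε i)⁻¹ := by positivity
    have : (ε i)⁻¹ * b i w w ≤ (ε i)⁻¹ * (bApprox i w w + c i * N) := by
      apply mul_le_mul_of_nonneg_left _ hinv.le
      linarith
    rw [div_eq_mul_inv]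
    nlinarith
  have hS : (0:ℝ) ≤ ∑ i, c i / ε i := by
    apply Finset.sum_nonneg
    intro i _
    exact div_nonneg (hc i) (hε i).le
  have hsum2 : (∑ i, c i / (ε i * αApprox)) = (∑ i, c i / ε i) / αApprox := by
    rw [Finset.sum_div]
    apply Finset.sum_congr rfl
    intro i _
    rw [div_div]
  rw [hsum2]
  have hbApproxSum : ∑ i, (ε i)⁻¹ * bApprox i w w ≤ A := by
    rw [hAdef]; nlinarith [haApprox_pos w]
  have hSN : (∑ i, c i / ε i) * N ≤ (∑ i, c i / ε i) / αApprox * A := by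
    rw [div_mul_eq_mul_div, le_div_iff₀ hαApprox]
    nlinarith [mul_nonneg hS (sub_nonneg.2 hcoercA)]
  have hNA : normA * N ≤ normA / αApprox * A := by
    rw [div_mul_eq_mul_div, le_div_iff₀ hαApprox]
    nlinarith [mul_nonneg hnormA (sub_nonneg.2 hcoercA)]
  calc a w w + ∑ i, (ε i)⁻¹ * b i w w
      ≤ normA * N + ((∑ i, (ε i)⁻¹ * bApprox i w w) + (∑ i, c i / ε i) * N) := by
        linarith
    _ ≤ normA / αApprox * A + (A + (∑ i, c i / ε i) / αApprox * A) := by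
        linarith
    _ = (normA / αApprox + 1 + (∑ i, c i / ε i) / αApprox) * A := by ring
end
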